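/- arXiv:2505.02757 — 3 statements merged into one kernel-verified Lean document; each statement's English description precedes it below -/
import Mathlib

section
/- Let n ≥ 2 be an integer, let r, R be real numbers with 0 < r < R, and for j ∈ {1, …, n} define w_j : ℝⁿ → ℝ by w_j(x) = (1 − rⁿ/|x|ⁿ)·x_j. Then each w_j is harmonic on ℝⁿ \ {0}; w_j(x) = 0 for every x with |x| = r; and for every x with |x| = R, the Fréchet derivative of w_j at x applied to the outward unit normal x/|x| equals σ₂·w_j(x), where σ₂ = (Rⁿ + (n−1)rⁿ)/(R·(Rⁿ − rⁿ)). In other words, the n functions w_1, …, w_n are eigenfunctions of the Steklov–Dirichlet problem on the spherical shell A_{r,R} with eigenvalue σ₂(A_{r,R}) = (Rⁿ + (n−1)rⁿ)/(R(Rⁿ − rⁿ)). -/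
/-!
With `ℓ = ⟨e_j, ·⟩` we have `w_j = ℓ − rⁿ · ℓ/‖·‖ⁿ`, and `ℓ/‖·‖ⁿ` is the Kelvin transform of the
linear function `ℓ`, hence harmonic: for `u = (1 − c/‖x‖ᵐ) ℓ(x)` the second directional derivatives
summed over an orthonormal basis give `c m (dim − m) ℓ(x) / ‖x‖ᵐ⁺²`. On the sphere `‖x‖ = R` the
radial derivative of `u` is `(1 + (m − 1) c/Rᵐ) ℓ(x)/R`, while `u = (1 − c/Rᵐ) ℓ(x)`.
-/

open ContinuousLinearMap
open scoped RealInnerProductSpace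

section

variable {E : Type*} [NormedAddCommGroup E] [InnerProductSpace ℝ E] {x : E}

theorem hasFDerivAt_norm (hx : x ≠ 0) : HasFDerivAt (‖·‖) (‖x‖⁻¹ • innerSL ℝ x) x := by
  have hx' : ‖x‖ ≠ 0 := norm_ne_zero_iff.2 hx
  have h := (hasStrictFDerivAt_norm_sq x).hasFDerivAt.sqrt (pow_ne_zero 2 hx')
  simp only [Real.sqrt_sq (norm_nonneg _)] at h
  convert h using 1
  ext v
  simp only [smul_apply, coe_innerSL_apply, smul_eq_mul, one_div, mul_inv_rev, nsmul_eq_mul,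
    Nat.cast_ofNat]
  field_simp

theorem hasFDerivAt_inv_norm_pow (m : ℕ) (hx : x ≠ 0) :
    HasFDerivAt (fun y : E ↦ (‖y‖ ^ m)⁻¹) ((-m / ‖x‖ ^ (m + 2)) • innerSL ℝ x) x := by
  have hx' : ‖x‖ ≠ 0 := norm_ne_zero_iff.2 hx
  have h := ((hasDerivAt_pow m ‖x‖).inv (pow_ne_zero m hx')).comp_hasFDerivAt x
    (hasFDerivAt_norm hx)
  refine h.congr_fderiv ?_
  rw [smul_smul]
  congr 1
  rcases m with _ | k
  · simp
  · simp only [Nat.add_sub_cancel]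
    field_simp
    ring

noncomputable def shellMode (c : ℝ) (m : ℕ) (ℓ : StrongDual ℝ E) (y : E) : ℝ :=
  (1 - c / ‖y‖ ^ m) * ℓ y

variable {c : ℝ} {m : ℕ} {ℓ : StrongDual ℝ E}

theorem contDiffOn_shellMode {k : WithTop ℕ∞} :
    ContDiffOn ℝ k (shellMode c m ℓ) {x | x ≠ 0} := fun _ hy ↦
  ((contDiffAt_const.sub (contDiffAt_const.div ((contDiffAt_norm ℝ hy).pow m)
    (pow_ne_zero m (norm_ne_zero_iff.2 hy)))).mul ℓ.contDiff.contDiffAt).contDiffWithinAt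

theorem hasFDerivAt_shellMode (hx : x ≠ 0) :
    HasFDerivAt (shellMode c m ℓ)
      ((1 - c / ‖x‖ ^ m) • ℓ + (c * m / ‖x‖ ^ (m + 2) * ℓ x) • innerSL ℝ x) x := by
  have h := (((hasFDerivAt_inv_norm_pow m hx).const_mul c).const_sub 1).mul ℓ.hasFDerivAt
  refine h.congr_fderiv ?_
  ext v
  simp only [add_apply, smul_apply, neg_apply, smul_eq_mul, coe_innerSL_apply, div_eq_mul_inv]
  ring

theorem fderiv_shellMode_apply (hx : x ≠ 0) (v : E) :
    fderiv ℝ (shellMode c m ℓ) x v =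
      (1 - c / ‖x‖ ^ m) * ℓ v + c * m / ‖x‖ ^ (m + 2) * ℓ x * ⟪x, v⟫ := by
  simp [(hasFDerivAt_shellMode hx).fderiv, mul_assoc]

theorem fderiv_fderiv_shellMode_apply (hx : x ≠ 0) (v : E) :
    fderiv ℝ (fun y ↦ fderiv ℝ (shellMode c m ℓ) y v) x v =
      c * m / ‖x‖ ^ (m + 2) *
        (2 * ⟪x, v⟫ * ℓ v + ‖v‖ ^ 2 * ℓ x - (m + 2) * ⟪x, v⟫ ^ 2 / ‖x‖ ^ 2 * ℓ x) := by
  have h_eq : (fun y ↦ fderiv ℝ (shellMode c m ℓ) y v) =ᶠ[nhds x]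
      fun y ↦ (1 - c * (‖y‖ ^ m)⁻¹) * ℓ v + c * m * ((‖y‖ ^ (m + 2))⁻¹ * (ℓ y * ⟪y, v⟫)) := by
    filter_upwards [isOpen_ne.mem_nhds hx] with y hy
    rw [fderiv_shellMode_apply hy]
    ring
  have h : HasFDerivAt (fun y ↦ (1 - c * (‖y‖ ^ m)⁻¹) * ℓ v +
      c * m * ((‖y‖ ^ (m + 2))⁻¹ * (ℓ y * ⟪y, v⟫))) _ x :=
    (((hasFDerivAt_inv_norm_pow m hx).const_mul c).const_sub 1).mul_const (ℓ v) |>.add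
    (((hasFDerivAt_inv_norm_pow (m + 2) hx).mul
      (ℓ.hasFDerivAt.mul ((hasFDerivAt_id x).inner ℝ (hasFDerivAt_const v x)))).const_mul (c * m))
  rw [h_eq.fderiv_eq, h.fderiv]
  have hx' : ‖x‖ ≠ 0 := norm_ne_zero_iff.2 hx
  simp only [add_apply, smul_apply, neg_apply, smul_eq_mul, coe_innerSL_apply, Pi.mul_apply,
    comp_apply, prod_apply, id_apply, zero_apply, fderivInnerCLM_apply, id_eq, inner_zero_right,
    real_inner_self_eq_norm_sq, Nat.cast_add, Nat.cast_ofNat]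
  field_simp
  ring

theorem sum_fderiv_fderiv_shellMode {ι : Type*} [Fintype ι] (b : OrthonormalBasis ι ℝ E)
    (hx : x ≠ 0) :
    ∑ i, fderiv ℝ (fun y ↦ fderiv ℝ (shellMode c m ℓ) y (b i)) x (b i) =
      c * m * (Fintype.card ι - m) / ‖x‖ ^ (m + 2) * ℓ x := by
  have hx' : ‖x‖ ≠ 0 := norm_ne_zero_iff.2 hx
  have h_trace : ∑ i, ⟪x, b i⟫ * ℓ (b i) = ℓ x := by
    conv_rhs => rw [← b.sum_repr' x]
    simp [real_inner_comm]
  simp only [fderiv_fderiv_shellMode_apply hx, ← Finset.mul_sum, Finset.sum_add_distrib,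
    Finset.sum_sub_distrib, b.orthonormal.1, ← Finset.sum_mul, ← Finset.sum_div,
    b.sum_sq_inner_left, mul_assoc, h_trace, one_pow, Finset.sum_const, Finset.card_univ,
    nsmul_eq_mul, one_mul]
  field_simp
  ring

theorem fderiv_shellMode_normal {R : ℝ} (hR : R ≠ 0) (hc : R ^ m ≠ c) (hxR : ‖x‖ = R) :
    fderiv ℝ (shellMode c m ℓ) x (‖x‖⁻¹ • x) =
      (R ^ m + (m - 1) * c) / (R * (R ^ m - c)) * shellMode c m ℓ x := by
  have hx : x ≠ 0 := norm_ne_zero_iff.1 (hxR ▸ hR)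
  rw [fderiv_shellMode_apply hx, map_smul, smul_eq_mul, real_inner_smul_right,
    real_inner_self_eq_norm_sq, shellMode, hxR]
  have : R ^ m - c ≠ 0 := sub_ne_zero.2 hc
  field_simp
  ring

end

theorem stmt2_general (n : ℕ) (r R : ℝ) (hr : 0 < r) (hrR : r < R)
    (w : Fin n → EuclideanSpace ℝ (Fin n) → ℝ)
    (hw : ∀ j x, w j x = (1 - r ^ n / ‖x‖ ^ n) * x j) :
    (∀ j, ContDiffOn ℝ 2 (w j) {x : EuclideanSpace ℝ (Fin n) | x ≠ 0}) ∧
    (∀ j, ∀ x : EuclideanSpace ℝ (Fin n), x ≠ 0 →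
      ∑ i : Fin n,
        fderiv ℝ (fun y => fderiv ℝ (w j) y (EuclideanSpace.single i (1 : ℝ))) x
          (EuclideanSpace.single i (1 : ℝ)) = 0) ∧
    (∀ j, ∀ x : EuclideanSpace ℝ (Fin n), ‖x‖ = r → w j x = 0) ∧
    (∀ j, ∀ x : EuclideanSpace ℝ (Fin n), ‖x‖ = R →
      fderiv ℝ (w j) x (‖x‖⁻¹ • x) =
        (R ^ n + ((n : ℝ) - 1) * r ^ n) / (R * (R ^ n - r ^ n)) * w j x) := by
  have hw_eq (j : Fin n) : w j = shellMode (r ^ n) n (EuclideanSpace.proj j) :=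
    funext (hw j)
  refine ⟨fun j ↦ hw_eq j ▸ contDiffOn_shellMode, fun j x hx ↦ ?_, fun j x hx ↦ ?_,
    fun j x hx ↦ ?_⟩
  · simpa [hw_eq j] using
      sum_fderiv_fderiv_shellMode (c := r ^ n) (m := n) (ℓ := EuclideanSpace.proj j)
        (EuclideanSpace.basisFun (Fin n) ℝ) hx
  · rw [hw, hx, div_self (pow_ne_zero n hr.ne'), sub_self, zero_mul]
  · have hrR_pow : r ^ n < R ^ n := pow_lt_pow_left₀ hrR hr.le j.pos.ne'
    rw [hw_eq j]
    exact fderiv_shellMode_normal (hr.trans hrR).ne' hrR_pow.ne' hx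

/-- The functions `w_j(x) = (1 − rⁿ/‖x‖ⁿ)·x_j`, `j = 1, …, n`, are eigenfunctions of
the Steklov–Dirichlet problem on the spherical shell `A_{r,R}` with eigenvalue
`σ₂(A_{r,R}) = (Rⁿ + (n−1)rⁿ)/(R(Rⁿ − rⁿ))`: each `w_j` is harmonic on `ℝⁿ \ {0}`
(twice continuously differentiable with vanishing Laplacian), vanishes on the inner
sphere `‖x‖ = r`, and on the outer sphere `‖x‖ = R` its Fréchet derivative in the
direction of the outward unit normal `x/‖x‖` equals `σ₂ · w_j(x)`. -/
theorem stmt2 (n : ℕ) (hn : 2 ≤ n) (r R : ℝ) (hr : 0 < r) (hrR : r < R)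
    (w : Fin n → EuclideanSpace ℝ (Fin n) → ℝ)
    (hw : ∀ j x, w j x = (1 - r ^ n / ‖x‖ ^ n) * x j) :
    (∀ j, ContDiffOn ℝ 2 (w j) {x : EuclideanSpace ℝ (Fin n) | x ≠ 0}) ∧
    (∀ j, ∀ x : EuclideanSpace ℝ (Fin n), x ≠ 0 →
      ∑ i : Fin n,
        fderiv ℝ (fun y => fderiv ℝ (w j) y (EuclideanSpace.single i (1 : ℝ))) x
          (EuclideanSpace.single i (1 : ℝ)) = 0) ∧
    (∀ j, ∀ x : EuclideanSpace ℝ (Fin n), ‖x‖ = r → w j x = 0) ∧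
    (∀ j, ∀ x : EuclideanSpace ℝ (Fin n), ‖x‖ = R →
      fderiv ℝ (w j) x (‖x‖⁻¹ • x) =
        (R ^ n + ((n : ℝ) - 1) * r ^ n) / (R * (R ^ n - r ^ n)) * w j x) :=
  stmt2_general n r R hr hrR w hw
end

section
/- Let n ≥ 2 be an integer and R > 0. Define g : [0, R) → ℝ by g(r) = (Rⁿ + (n−1)rⁿ)/(R·(Rⁿ − rⁿ)). Then g is differentiable on (0, R) with derivative g′(r) = n²·R^{n−1}·r^{n−1}/(Rⁿ − rⁿ)² > 0 for every r ∈ (0, R), and g is strictly monotone increasing on [0, R). In other words, the second Steklov–Dirichlet eigenvalue σ₂(A_{r,R}) of the spherical shell is strictly increasing with respect to the inner radius r ∈ [0, R). -/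
/-!
Writing `Rⁿ + (n−1)rⁿ = n·Rⁿ − (n−1)(Rⁿ − rⁿ)` gives
`σ₂(A_{r,R}) = n·R^{n−1}/(Rⁿ − rⁿ) − (n−1)/R`. Since `Rⁿ − rⁿ` is positive and strictly decreasing
on `[0, R)`, this is strictly increasing, and differentiating the reciprocal gives the derivative.
-/

open Set

noncomputable def shellSigmaTwo (n : ℕ) (R r : ℝ) : ℝ :=
  (R ^ n + ((n : ℝ) - 1) * r ^ n) / (R * (R ^ n - r ^ n))

lemma shellSigmaTwo_eq_div_sub {n : ℕ} {R r : ℝ} (hR : R ≠ 0) (hr : R ^ n - r ^ n ≠ 0) :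
    shellSigmaTwo n R r = n * R ^ (n - 1) / (R ^ n - r ^ n) - ((n : ℝ) - 1) / R := by
  have hn : n ≠ 0 := by rintro rfl; simp at hr
  have hRn : R ^ n = R ^ (n - 1) * R := by rw [← pow_succ, Nat.sub_add_cancel (by omega)]
  rw [shellSigmaTwo]
  field_simp
  rw [hRn]
  ring

lemma hasDerivAt_shellSigmaTwo {n : ℕ} {R r : ℝ} (hR : R ≠ 0) (hr : R ^ n - r ^ n ≠ 0) :
    HasDerivAt (shellSigmaTwo n R)
      ((n : ℝ) ^ 2 * R ^ (n - 1) * r ^ (n - 1) / (R ^ n - r ^ n) ^ 2) r := by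
  have hnear : (fun s => n * R ^ (n - 1) * (R ^ n - s ^ n)⁻¹ - ((n : ℝ) - 1) / R)
      =ᶠ[nhds r] shellSigmaTwo n R := by
    have hopen :=
      isOpen_ne_fun (f := fun s => R ^ n - s ^ n) (by fun_prop) (continuous_const (y := 0))
    filter_upwards [hopen.mem_nhds hr] with s hs
    rw [shellSigmaTwo_eq_div_sub hR hs, ← div_eq_mul_inv]
  have hinv : HasDerivAt (fun s => (R ^ n - s ^ n)⁻¹) (n * r ^ (n - 1) / (R ^ n - r ^ n) ^ 2) r :=
    ((hasDerivAt_const r (R ^ n)).sub (hasDerivAt_pow n r)).inv hr |>.congr_deriv (by simp)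
  refine ((hinv.const_mul _).sub_const _).congr_of_eventuallyEq hnear.symm |>.congr_deriv ?_
  ring

lemma sub_pow_pos_of_mem_Ico {n : ℕ} {R r : ℝ} (hn : n ≠ 0) (hr : r ∈ Ico 0 R) :
    0 < R ^ n - r ^ n :=
  sub_pos.2 (pow_lt_pow_left₀ hr.2 hr.1 hn)

lemma strictMonoOn_shellSigmaTwo {n : ℕ} (hn : n ≠ 0) (R : ℝ) :
    StrictMonoOn (shellSigmaTwo n R) (Ico 0 R) := by
  intro a ha b hb hab
  have hR : 0 < R := ha.1.trans_lt ha.2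
  have hua := sub_pow_pos_of_mem_Ico hn ha
  have hub := sub_pow_pos_of_mem_Ico hn hb
  have hu : R ^ n - b ^ n < R ^ n - a ^ n := sub_lt_sub_left (pow_lt_pow_left₀ hab ha.1 hn) _
  rw [shellSigmaTwo_eq_div_sub hR.ne' hua.ne', shellSigmaTwo_eq_div_sub hR.ne' hub.ne']
  gcongr

theorem stmt5_general (n : ℕ) (hn : 2 ≤ n) (R : ℝ)
    (g : ℝ → ℝ)
    (hg : ∀ r, g r = (R ^ n + ((n : ℝ) - 1) * r ^ n) / (R * (R ^ n - r ^ n))) :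
    (∀ r ∈ Set.Ioo (0 : ℝ) R,
      HasDerivAt g ((n : ℝ) ^ 2 * R ^ (n - 1) * r ^ (n - 1) / (R ^ n - r ^ n) ^ 2) r ∧
      0 < (n : ℝ) ^ 2 * R ^ (n - 1) * r ^ (n - 1) / (R ^ n - r ^ n) ^ 2) ∧
    StrictMonoOn g (Set.Ico 0 R) := by
  obtain rfl : g = shellSigmaTwo n R := funext hg
  have hn : n ≠ 0 := by omega
  refine ⟨fun r hr => ?_, strictMonoOn_shellSigmaTwo hn R⟩
  have hR : 0 < R := hr.1.trans hr.2
  have hu := sub_pow_pos_of_mem_Ico hn (Ioo_subset_Ico_self hr)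
  exact ⟨hasDerivAt_shellSigmaTwo hR.ne' hu.ne', by have := hr.1; positivity⟩

/-- The second Steklov–Dirichlet eigenvalue of the spherical shell,
`g(r) = (Rⁿ + (n−1)rⁿ)/(R·(Rⁿ − rⁿ))`, is differentiable on `(0, R)` with derivative
`g′(r) = n²·R^{n−1}·r^{n−1}/(Rⁿ − rⁿ)² > 0`, and is strictly monotone increasing on
`[0, R)` (with `g(0) = 1/R`). -/
theorem stmt5 (n : ℕ) (hn : 2 ≤ n) (R : ℝ) (hR : 0 < R)
    (g : ℝ → ℝ)
    (hg : ∀ r, g r = (R ^ n + ((n : ℝ) - 1) * r ^ n) / (R * (R ^ n - r ^ n))) :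
    (∀ r ∈ Set.Ioo (0 : ℝ) R,
      HasDerivAt g ((n : ℝ) ^ 2 * R ^ (n - 1) * r ^ (n - 1) / (R ^ n - r ^ n) ^ 2) r ∧
      0 < (n : ℝ) ^ 2 * R ^ (n - 1) * r ^ (n - 1) / (R ^ n - r ^ n) ^ 2) ∧
    StrictMonoOn g (Set.Ico 0 R) :=
  stmt5_general n hn R g hg
end

section
/- Let n ≥ 3 be an integer and let 0 < r < ε. Define ρ : ℝⁿ \ {0} → ℝ by ρ(x) = (r^{2−n} − |x|^{2−n})/(r^{2−n} − ε^{2−n}). Then for every x in the annulus A_{r,ε} = {x ∈ ℝⁿ : r < |x| < ε}, the gradient of ρ at x equals (n−2)·x/(|x|ⁿ·(r^{2−n} − ε^{2−n})), and ∫_{A_{r,ε}} ‖∇ρ(x)‖² dx = n·ω_n·(n−2)/(r^{2−n} − ε^{2−n}), where ω_n is the Lebesgue measure of the unit ball in ℝⁿ. Consequently, if Ω₀ ⊆ ℝⁿ is an open bounded set containing the origin, (r_ε)_{ε>0} is a family with 0 < r_ε < ε and r_ε/ε^{n/(n−2)} → 0 as ε → 0⁺, and ω^ε : ℝⁿ →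 ℝ is defined by ω^ε(x) = 0 for |x| ≤ r_ε, ω^ε(x) = ρ(x) (with r = r_ε) for r_ε < |x| < ε, and ω^ε(x) = 1 for |x| ≥ ε, then ∫_{Ω₀} ‖∇ω^ε(x)‖² dx → 0 and ∫_{Ω₀} (ω^ε(x))² dx → |Ω₀| as ε → 0⁺. -/
/-!
With `D = r^{2-n} - ε^{2-n}`, the profile is radial with `|∇ρ(x)|² = ((n-2)/D)² |x|^{2-2n}`, so in
polar coordinates its energy on the annulus is `n ω_n ((n-2)/D)² ∫_r^ε t^{1-n} dt = n ω_n (n-2)/D`.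
Off the two spheres `|x| = r_ε`, `|x| = ε` (a null set) the corrector is locally `0`, `ρ` or `1`,
so its energy on `Ω₀` is at most `n ω_n (n-2)/D`; and `1/D = r_ε^{n-2} / (1 - (r_ε/ε)^{n-2}) → 0`
because `r_ε = o(ε^{n/(n-2)})` forces `r_ε/ε → 0`. Finally `0 ≤ ω^ε ≤ 1` with `ω^ε = 1` off `B_ε`,
so `∫_{Ω₀} (ω^ε)²` differs from `|Ω₀|` by at most `|B_ε| = ε^n ω_n → 0`.
-/

open Filter MeasureTheory Metric Set InnerProductSpace Module Topology

noncomputable section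

def potentialDrop (n : ℕ) (r ε : ℝ) : ℝ := r ^ (2 - (n : ℝ)) - ε ^ (2 - (n : ℝ))

theorem potentialDrop_pos {n : ℕ} (hn : 2 < n) {r ε : ℝ} (hr : 0 < r) (hrε : r < ε) :
    0 < potentialDrop n r ε :=
  sub_pos.2 <| Real.rpow_lt_rpow_of_neg hr hrε <| by
    have : (2 : ℝ) < n := by exact_mod_cast hn
    linarith

theorem potentialDrop_eq (n : ℕ) {r ε : ℝ} (hr : 0 < r) (hε : 0 < ε) :
    potentialDrop n r ε = (1 - (r / ε) ^ ((n : ℝ) - 2)) / r ^ ((n : ℝ) - 2) := by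
  have hrn := (Real.rpow_pos_of_pos hr ((n : ℝ) - 2)).ne'
  have hεn := (Real.rpow_pos_of_pos hε ((n : ℝ) - 2)).ne'
  rw [potentialDrop, Real.div_rpow hr.le hε.le, show 2 - (n : ℝ) = -((n : ℝ) - 2) by ring,
    Real.rpow_neg hr.le, Real.rpow_neg hε.le]
  field_simp

theorem tendsto_inv_potentialDrop {α : Type*} {l : Filter α} {n : ℕ} (hn : 2 < n)
    {r ε : α → ℝ} (hpos : ∀ᶠ a in l, 0 < r a ∧ 0 < ε a) (hr : Tendsto r l (𝓝 0))
    (hratio : Tendsto (fun a ↦ r a / ε a) l (𝓝 0)) :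
    Tendsto (fun a ↦ (potentialDrop n (r a) (ε a))⁻¹) l (𝓝 0) := by
  have hp : 0 < (n : ℝ) - 2 := by
    have : (2 : ℝ) < n := by exact_mod_cast hn
    linarith
  have h := (hr.rpow_const_nhds_zero hp).div
    (tendsto_const_nhds.sub (hratio.rpow_const_nhds_zero hp)) (by norm_num : (1 : ℝ) - 0 ≠ 0)
  rw [zero_div] at h
  refine h.congr' (hpos.mono fun a ha ↦ ?_)
  simp only [Pi.div_apply]
  rw [potentialDrop_eq n ha.1 ha.2, inv_div]

theorem tendsto_div_of_tendsto_div_rpow {f : ℝ → ℝ} {q : ℝ} (hq : 1 ≤ q)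
    (hf : Tendsto (fun ε ↦ f ε / ε ^ q) (𝓝[>] 0) (𝓝 0)) :
    Tendsto (fun ε ↦ f ε / ε) (𝓝[>] 0) (𝓝 0) := by
  have hpow : Tendsto (fun ε : ℝ ↦ ε ^ (q - 1)) (𝓝[>] 0) (𝓝 ((0 : ℝ) ^ (q - 1))) :=
    (tendsto_nhdsWithin_of_tendsto_nhds tendsto_id).rpow_const (Or.inr (sub_nonneg.2 hq))
  have h := hf.mul hpow
  rw [zero_mul] at h
  refine h.congr' (eventually_mem_nhdsWithin.mono fun ε (hε : 0 < ε) ↦ ?_)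
  have hεq := (Real.rpow_pos_of_pos hε q).ne'
  rw [Real.rpow_sub_one hε.ne']
  field_simp

theorem abs_setIntegral_sub_measureReal_le {α : Type*} [MeasurableSpace α] {μ : Measure α}
    {s t : Set α} {f : α → ℝ} (hf : AEStronglyMeasurable f (μ.restrict s)) (hs : μ s ≠ ⊤)
    (ht : MeasurableSet t) (ht' : μ t ≠ ⊤) (hf01 : ∀ x, f x ∈ Icc 0 1)
    (hft : ∀ x ∉ t, f x = 1) :
    |∫ x in s, f x ∂μ - μ.real s| ≤ μ.real t := by
  have := isFiniteMeasure_restrict.2 hs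
  have hfi : Integrable f (μ.restrict s) :=
    .of_bound hf 1 (.of_forall fun x ↦ by
      rw [Real.norm_eq_abs, abs_of_nonneg (hf01 x).1]
      exact (hf01 x).2)
  have hdefect : ∀ x, ‖f x - 1‖ ≤ t.indicator 1 x := fun x ↦ by
    by_cases hx : x ∈ t
    · rw [indicator_of_mem hx, Pi.one_apply, Real.norm_eq_abs, abs_sub_comm,
        abs_of_nonneg (sub_nonneg.2 (hf01 x).2)]
      linarith [(hf01 x).1]
    · simp [indicator_of_notMem hx, hft x hx]
  calc |∫ x in s, f x ∂μ - μ.real s|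
      = ‖∫ x in s, (f x - 1) ∂μ‖ := by
        rw [integral_sub hfi (integrable_const 1), setIntegral_const, smul_eq_mul, mul_one,
          Real.norm_eq_abs]
    _ ≤ ∫ x in s, t.indicator 1 x ∂μ :=
        norm_integral_le_of_norm_le ((integrable_const 1).indicator ht) (.of_forall hdefect)
    _ = μ.real (s ∩ t) := by
        rw [setIntegral_indicator ht, Pi.one_def, setIntegral_const, smul_eq_mul, mul_one]
    _ ≤ μ.real t := measureReal_mono inter_subset_right ht'

section Profile

variable {E : Type*} [NormedAddCommGroup E]

def harmonicProfile (n : ℕ) (r ε : ℝ) (y : E) : ℝ :=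
  (r ^ (2 - (n : ℝ)) - ‖y‖ ^ (2 - (n : ℝ))) / potentialDrop n r ε

def annulus (r ε : ℝ) : Set E := {y | r < ‖y‖ ∧ ‖y‖ < ε}

def corrector (n : ℕ) (r ε : ℝ) (y : E) : ℝ :=
  if ‖y‖ ≤ r then 0 else if ‖y‖ < ε then harmonicProfile n r ε y else 1

theorem corrector_mem_Icc {n : ℕ} (hn : 2 ≤ n) {r ε : ℝ} (hr : 0 < r) (x : E) :
    corrector n r ε x ∈ Icc 0 1 := by
  have hp : 2 - (n : ℝ) ≤ 0 := by
    have : (2 : ℝ) ≤ n := by exact_mod_cast hn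
    linarith
  unfold corrector
  split_ifs with hxr hxε
  · simp
  · have hxr : r < ‖x‖ := not_le.1 hxr
    have hnum := sub_nonneg.2 (Real.rpow_le_rpow_of_nonpos hr hxr.le hp)
    have hle : r ^ (2 - (n : ℝ)) - ‖x‖ ^ (2 - (n : ℝ)) ≤ potentialDrop n r ε :=
      sub_le_sub_left (Real.rpow_le_rpow_of_nonpos (hr.trans hxr) hxε.le hp) _
    exact mem_Icc.2 ⟨div_nonneg hnum (hnum.trans hle), div_le_one_of_le₀ hle (hnum.trans hle)⟩
  · simp

theorem corrector_of_le_norm (n : ℕ) {r ε : ℝ} (hrε : r < ε) {x : E} (hx : ε ≤ ‖x‖) :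
    corrector n r ε x = 1 := by
  simp [corrector, (hrε.trans_le hx).not_ge, hx.not_gt]

theorem measurable_corrector [MeasurableSpace E] [BorelSpace E] (n : ℕ) (r ε : ℝ) :
    Measurable (corrector n r ε : E → ℝ) := by
  unfold corrector harmonicProfile
  exact Measurable.ite (measurableSet_le measurable_norm measurable_const) measurable_const <|
    Measurable.ite (measurableSet_lt measurable_norm measurable_const)
      ((measurable_const.sub (measurable_norm.pow_const _)).div_const _) measurable_const

theorem measurableSet_annulus [MeasurableSpace E] [BorelSpace E] (r ε : ℝ) :
    MeasurableSet (annulus r ε : Set E) :=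
  measurable_norm measurableSet_Ioo

end Profile

section Gradient

variable {E : Type*} [NormedAddCommGroup E] [InnerProductSpace ℝ E]

theorem hasStrictFDerivAt_norm_rpow_of_ne_zero {x : E} (hx : x ≠ 0) (p : ℝ) :
    HasStrictFDerivAt (fun y : E ↦ ‖y‖ ^ p) ((p * ‖x‖ ^ (p - 2)) • innerSL ℝ x) x := by
  convert! (hasStrictFDerivAt_norm_sq x).rpow_const (p := p / 2) (by simp [hx]) using 0
  simp_rw [← Real.rpow_natCast_mul (norm_nonneg _), ← Nat.cast_smul_eq_nsmul ℝ, smul_smul]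
  ring_nf

variable [CompleteSpace E]

theorem hasGradientAt_harmonicProfile (n : ℕ) (r ε : ℝ) {x : E} (hx : x ≠ 0) :
    HasGradientAt (harmonicProfile n r ε)
      ((((n : ℝ) - 2) / (‖x‖ ^ n * potentialDrop n r ε)) • x) x := by
  have hfun : harmonicProfile n r ε = fun y : E ↦
      (potentialDrop n r ε)⁻¹ • (r ^ (2 - (n : ℝ)) - ‖y‖ ^ (2 - (n : ℝ))) :=
    funext fun y ↦ div_eq_inv_mul _ _
  rw [hasGradientAt_iff_hasFDerivAt, hfun]
  refine (((hasStrictFDerivAt_norm_rpow_of_ne_zero hx (2 - (n : ℝ))).hasFDerivAt.const_sub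
    (r ^ (2 - (n : ℝ)))).const_smul (potentialDrop n r ε)⁻¹).congr_fderiv ?_
  ext y
  simp only [sub_sub_cancel_left, Real.rpow_neg_natCast, zpow_neg, zpow_natCast, smul_neg,
    neg_apply, smul_apply, coe_innerSL_apply, smul_eq_mul, map_smul, toDual_apply_apply]
  ring

theorem norm_gradient_harmonicProfile_sq (n : ℕ) (r ε : ℝ) {x : E} (hx : x ≠ 0) :
    ‖gradient (harmonicProfile n r ε) x‖ ^ 2
      = (((n : ℝ) - 2) / potentialDrop n r ε) ^ 2 * ‖x‖ ^ (2 - 2 * (n : ℝ)) := by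
  have hx' : 0 < ‖x‖ := norm_pos_iff.2 hx
  rw [(hasGradientAt_harmonicProfile n r ε hx).gradient, norm_smul, Real.norm_eq_abs, mul_pow,
    sq_abs, show 2 - 2 * (n : ℝ) = 2 + -(2 * n) by ring, Real.rpow_add hx', Real.rpow_neg hx'.le,
    Real.rpow_two, show (2 * n : ℝ) = ((2 * n : ℕ) : ℝ) by push_cast; ring, Real.rpow_natCast,
    pow_mul']
  field_simp

theorem gradient_corrector_eq_indicator (n : ℕ) {r ε : ℝ} {x : E} (hxr : ‖x‖ ≠ r)
    (hxε : ‖x‖ ≠ ε) :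
    gradient (corrector n r ε) x
      = (annulus r ε).indicator (gradient (harmonicProfile n r ε)) x := by
  have hnorm := continuous_norm.tendsto x
  rcases hxr.lt_or_gt with hxr | hxr
  · have hloc : corrector n r ε =ᶠ[𝓝 x] fun _ ↦ 0 := by
      filter_upwards [hnorm.eventually (eventually_lt_nhds hxr)] with y hy
      simp [corrector, hy.le]
    rw [hloc.gradient_eq, gradient_fun_const, indicator_of_notMem (fun h ↦ hxr.not_gt h.1)]
  rcases hxε.lt_or_gt with hxε | hxε
  · have hloc : corrector n r ε =ᶠ[𝓝 x] harmonicProfile n r ε := by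
      filter_upwards [hnorm.eventually (eventually_gt_nhds hxr),
        hnorm.eventually (eventually_lt_nhds hxε)] with y hyr hyε
      simp [corrector, hyr.not_ge, hyε]
    rw [hloc.gradient_eq, indicator_of_mem (show x ∈ annulus r ε from ⟨hxr, hxε⟩)]
  · have hloc : corrector n r ε =ᶠ[𝓝 x] fun _ ↦ 1 := by
      filter_upwards [hnorm.eventually (eventually_gt_nhds hxr),
        hnorm.eventually (eventually_gt_nhds hxε)] with y hyr hyε
      simp [corrector, hyr.not_ge, hyε.not_gt]
    rw [hloc.gradient_eq, gradient_fun_const, indicator_of_notMem (fun h ↦ hxε.not_gt h.2)]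

end Gradient

section Radial

variable {E : Type*} [NormedAddCommGroup E] [NormedSpace ℝ E] [FiniteDimensional ℝ E]
  [MeasurableSpace E] [BorelSpace E] (μ : Measure E) [μ.IsAddHaarMeasure]

theorem integrableOn_annulus_norm_rpow {r : ℝ} (hr : 0 < r) (ε p : ℝ) :
    IntegrableOn (fun x : E ↦ ‖x‖ ^ p) (annulus r ε) μ := by
  have hK : IsCompact (closedBall (0 : E) ε \ ball 0 r) :=
    (isCompact_closedBall _ _).diff isOpen_ball
  have hcont : ContinuousOn (fun x : E ↦ ‖x‖ ^ p) (closedBall (0 : E) ε \ ball 0 r) :=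
    continuous_norm.continuousOn.rpow_const fun x hx ↦
      Or.inl (hr.trans_le (by simpa using hx.2)).ne'
  refine (hcont.integrableOn_compact hK).mono_set fun x hx ↦ ⟨?_, ?_⟩
  · simpa using hx.2.le
  · simpa using hx.1.le

theorem setIntegral_annulus_norm_rpow [Nontrivial E] {r ε : ℝ} (hr : 0 < r) (hrε : r ≤ ε)
    {p : ℝ} (hp : p + finrank ℝ E ≠ 0) :
    ∫ x in annulus r ε, ‖x‖ ^ p ∂μ
      = finrank ℝ E * μ.real (ball 0 1)
          * ((ε ^ (p + finrank ℝ E) - r ^ (p + finrank ℝ E)) / (p + finrank ℝ E)) := by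
  set d := finrank ℝ E
  have hd : 1 ≤ d := finrank_pos
  have hintegrand : ∀ y ∈ Ioi 0, y ^ (d - 1) • (Ioo r ε).indicator (· ^ p) y
      = (Ioo r ε).indicator (· ^ (p + d - 1)) y := fun y hy0 ↦ by
    by_cases hy : y ∈ Ioo r ε
    · rw [indicator_of_mem hy, indicator_of_mem hy, smul_eq_mul, ← Real.rpow_natCast,
        ← Real.rpow_add hy0, Nat.cast_sub hd]
      ring_nf
    · simp [indicator_of_notMem hy]
  have h0 : (0 : ℝ) ∉ uIcc r ε := by
    rw [uIcc_of_le hrε]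
    exact fun h ↦ hr.not_ge h.1
  calc ∫ x in annulus r ε, ‖x‖ ^ p ∂μ
      = ∫ x, (Ioo r ε).indicator (· ^ p) ‖x‖ ∂μ := by
        rw [← integral_indicator (measurableSet_annulus r ε)]
        rfl
    _ = d * μ.real (ball 0 1) * ∫ y in Ioo r ε, y ^ (p + d - 1) := by
        rw [integral_fun_norm_addHaar, nsmul_eq_mul, smul_eq_mul, mul_assoc,
          setIntegral_congr_fun measurableSet_Ioi hintegrand,
          setIntegral_indicator measurableSet_Ioo,
          inter_eq_self_of_subset_right (Ioo_subset_Ioi_self.trans (Ioi_subset_Ioi hr.le))]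
    _ = _ := by
        rw [← integral_Ioc_eq_integral_Ioo, ← intervalIntegral.integral_of_le hrε,
          integral_rpow (Or.inr ⟨by contrapose! hp; linarith, h0⟩), sub_add_cancel]

end Radial

section Energy

variable {E : Type*} [NormedAddCommGroup E] [InnerProductSpace ℝ E] [FiniteDimensional ℝ E]
  [MeasurableSpace E] [BorelSpace E] (μ : Measure E) [μ.IsAddHaarMeasure]

theorem integrableOn_annulus_norm_gradient_harmonicProfile_sq (n : ℕ) {r : ℝ} (hr : 0 < r)
    (ε : ℝ) :
    IntegrableOn (fun x ↦ ‖gradient (harmonicProfile n r ε) x‖ ^ 2) (annulus r ε) μ :=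
  IntegrableOn.congr_fun ((integrableOn_annulus_norm_rpow μ hr ε _).const_mul _)
    (fun _ hx ↦ (norm_gradient_harmonicProfile_sq n r ε
      (norm_pos_iff.1 (hr.trans hx.1))).symm) (measurableSet_annulus r ε)

theorem setIntegral_annulus_norm_gradient_harmonicProfile_sq {n : ℕ} (hE : finrank ℝ E = n)
    (hn : 2 < n) {r ε : ℝ} (hr : 0 < r) (hrε : r < ε) :
    ∫ x in annulus r ε, ‖gradient (harmonicProfile n r ε) x‖ ^ 2 ∂μ
      = n * μ.real (ball 0 1) * (n - 2) / potentialDrop n r ε := by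
  have : Nontrivial E := nontrivial_of_finrank_pos (R := ℝ) (by rw [hE]; omega)
  have hn' : (2 : ℝ) < n := by exact_mod_cast hn
  have hD := potentialDrop_pos hn hr hrε
  have h2n : 2 - (n : ℝ) ≠ 0 := by linarith
  rw [setIntegral_congr_fun (measurableSet_annulus r ε) fun x hx ↦
      norm_gradient_harmonicProfile_sq n r ε (norm_pos_iff.1 (hr.trans hx.1)),
    integral_const_mul, setIntegral_annulus_norm_rpow μ hr hrε.le (by rw [hE]; linarith), hE,
    show 2 - 2 * (n : ℝ) + n = 2 - n by ring]
  unfold potentialDrop at hD ⊢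
  field_simp
  ring

theorem setIntegral_norm_gradient_corrector_sq_le {n : ℕ} (hE : finrank ℝ E = n) (hn : 2 < n)
    {r ε : ℝ} (hr : 0 < r) (hrε : r < ε) (s : Set E) :
    ∫ x in s, ‖gradient (corrector n r ε) x‖ ^ 2 ∂μ
      ≤ n * μ.real (ball 0 1) * (n - 2) / potentialDrop n r ε := by
  have hsphere (a : ℝ) (ha : 0 < a) : ∀ᵐ x ∂μ, ‖x‖ ≠ a := by
    filter_upwards [measure_eq_zero_iff_ae_notMem.1 (μ.addHaar_sphere_of_ne_zero 0 ha.ne')]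
      with x hx
    simpa using hx
  have hae : ∀ᵐ x ∂μ, ‖gradient (corrector n r ε) x‖ ^ 2
      = (annulus r ε).indicator (fun x ↦ ‖gradient (harmonicProfile n r ε) x‖ ^ 2) x := by
    filter_upwards [hsphere r hr, hsphere ε (hr.trans hrε)] with x hxr hxε
    rw [gradient_corrector_eq_indicator n hxr hxε]
    by_cases hx : x ∈ annulus r ε <;> simp [hx]
  calc ∫ x in s, ‖gradient (corrector n r ε) x‖ ^ 2 ∂μ
      = ∫ x in s ∩ annulus r ε, ‖gradient (harmonicProfile n r ε) x‖ ^ 2 ∂μ := by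
        rw [integral_congr_ae (ae_restrict_of_ae hae),
          setIntegral_indicator (measurableSet_annulus r ε)]
    _ ≤ ∫ x in annulus r ε, ‖gradient (harmonicProfile n r ε) x‖ ^ 2 ∂μ :=
        setIntegral_mono_set (integrableOn_annulus_norm_gradient_harmonicProfile_sq μ n hr ε)
          (.of_forall fun _ ↦ by positivity) inter_subset_right.eventuallyLE
    _ = _ := setIntegral_annulus_norm_gradient_harmonicProfile_sq μ hE hn hr hrε

theorem tendsto_setIntegral_norm_gradient_corrector_sq {n : ℕ} (hE : finrank ℝ E = n)
    (hn : 2 < n) (s : Set E) {rε : ℝ → ℝ} (hrε : ∀ ε, 0 < ε → 0 < rε ε ∧ rε ε < ε)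
    (hratio : Tendsto (fun ε ↦ rε ε / ε) (𝓝[>] 0) (𝓝 0)) :
    Tendsto (fun ε ↦ ∫ x in s, ‖gradient (corrector n (rε ε) ε) x‖ ^ 2 ∂μ) (𝓝[>] 0) (𝓝 0) := by
  have hpos : ∀ᶠ ε in 𝓝[>] 0, 0 < rε ε ∧ rε ε < ε := eventually_mem_nhdsWithin.mono hrε
  have hr : Tendsto rε (𝓝[>] 0) (𝓝 0) :=
    squeeze_zero' (hpos.mono fun _ h ↦ h.1.le) (hpos.mono fun _ h ↦ h.2.le)
      (tendsto_nhdsWithin_of_tendsto_nhds tendsto_id)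
  have hbound := (tendsto_inv_potentialDrop hn (hpos.mono fun _ h ↦ ⟨h.1, h.1.trans h.2⟩) hr
    hratio).const_mul ((n : ℝ) * μ.real (ball 0 1) * (n - 2))
  rw [mul_zero] at hbound
  refine squeeze_zero' (.of_forall fun _ ↦ integral_nonneg fun _ ↦ by positivity)
    (hpos.mono fun ε h ↦ ?_) hbound
  rw [← div_eq_mul_inv]
  exact setIntegral_norm_gradient_corrector_sq_le μ hE hn h.1 h.2 s

end Energy

theorem tendsto_setIntegral_corrector_sq {E : Type*} [NormedAddCommGroup E] [NormedSpace ℝ E]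
    [Nontrivial E] [FiniteDimensional ℝ E] [MeasurableSpace E] [BorelSpace E] (μ : Measure E)
    [μ.IsAddHaarMeasure] {n : ℕ} (hn : 2 ≤ n) {s : Set E} (hs : μ s ≠ ⊤) {rε : ℝ → ℝ}
    (hrε : ∀ ε, 0 < ε → 0 < rε ε ∧ rε ε < ε) :
    Tendsto (fun ε ↦ ∫ x in s, corrector n (rε ε) ε x ^ 2 ∂μ) (𝓝[>] 0) (𝓝 (μ.real s)) := by
  have hball : Tendsto (fun ε ↦ μ.real (closedBall (0 : E) ε)) (𝓝[>] 0) (𝓝 0) := by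
    have h : Tendsto (fun ε : ℝ ↦ ε ^ finrank ℝ E * μ.real (ball (0 : E) 1)) (𝓝 0) (𝓝 0) :=
      ((continuous_id.pow _).mul continuous_const).tendsto' 0 0 (by simp [finrank_pos.ne'])
    refine (h.mono_left nhdsWithin_le_nhds).congr' ?_
    filter_upwards [self_mem_nhdsWithin] with ε (hε : 0 < ε)
    exact (μ.addHaar_real_closedBall 0 hε.le).symm
  rw [tendsto_iff_norm_sub_tendsto_zero]
  refine squeeze_zero' (.of_forall fun _ ↦ norm_nonneg _)
    (eventually_mem_nhdsWithin.mono fun ε hε ↦ ?_) hball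
  obtain ⟨hr, hrε⟩ := hrε ε hε
  have h01 := corrector_mem_Icc (E := E) hn hr (ε := ε)
  exact abs_setIntegral_sub_measureReal_le
    ((measurable_corrector n _ ε).pow_const 2).aestronglyMeasurable hs measurableSet_closedBall
    measure_closedBall_lt_top.ne (fun x ↦ ⟨sq_nonneg _, pow_le_one₀ (h01 x).1 (h01 x).2⟩)
    fun x hx ↦ by
      rw [corrector_of_le_norm n hrε (by simpa using hx : ε < ‖x‖).le, one_pow]

end

/-- For `n ≥ 3` and `0 < r < ε`, the corrector profile
`ρ(x) = (r^{2−n} − ‖x‖^{2−n})/(r^{2−n} − ε^{2−n})` on the annulus `A_{r,ε} ⊆ ℝⁿ`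
has gradient `∇ρ(x) = (n−2)·x/(‖x‖ⁿ·(r^{2−n} − ε^{2−n}))` there, and its Dirichlet
energy equals `n·ω_n·(n−2)/(r^{2−n} − ε^{2−n})`, where `ω_n` is the volume of the
unit ball of `ℝⁿ`. Consequently, for an open bounded set `Ω₀ ⊆ ℝⁿ` containing the
origin and a family `0 < r_ε < ε` with `r_ε/ε^{n/(n−2)} → 0` as `ε → 0⁺`, the
corrector `ω^ε` (equal to `0` on `B_{r_ε}`, to `ρ` on `A_{r_ε,ε}`, and to `1`
outside `B_ε`) satisfies `∫_{Ω₀} ‖∇ω^ε‖² → 0` and `∫_{Ω₀} (ω^ε)² → |Ω₀|`. -/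
theorem stmt13 (n : ℕ) (hn : 3 ≤ n) :
    (∀ r ε : ℝ, 0 < r → r < ε →
      (∀ x : EuclideanSpace ℝ (Fin n), r < ‖x‖ → ‖x‖ < ε →
        gradient (fun y : EuclideanSpace ℝ (Fin n) =>
            (r ^ (2 - (n : ℝ)) - ‖y‖ ^ (2 - (n : ℝ)))
              / (r ^ (2 - (n : ℝ)) - ε ^ (2 - (n : ℝ)))) x
          = (((n : ℝ) - 2) / (‖x‖ ^ n * (r ^ (2 - (n : ℝ)) - ε ^ (2 - (n : ℝ))))) • x) ∧
      (∫ x in {y : EuclideanSpace ℝ (Fin n) | r < ‖y‖ ∧ ‖y‖ < ε},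
          ‖gradient (fun y : EuclideanSpace ℝ (Fin n) =>
              (r ^ (2 - (n : ℝ)) - ‖y‖ ^ (2 - (n : ℝ)))
                / (r ^ (2 - (n : ℝ)) - ε ^ (2 - (n : ℝ)))) x‖ ^ 2)
        = (n : ℝ) * (volume (Metric.ball (0 : EuclideanSpace ℝ (Fin n)) 1)).toReal
            * ((n : ℝ) - 2) / (r ^ (2 - (n : ℝ)) - ε ^ (2 - (n : ℝ)))) ∧
    (∀ Ω₀ : Set (EuclideanSpace ℝ (Fin n)), IsOpen Ω₀ → Bornology.IsBounded Ω₀ →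
      (0 : EuclideanSpace ℝ (Fin n)) ∈ Ω₀ →
      ∀ rε : ℝ → ℝ, (∀ ε : ℝ, 0 < ε → 0 < rε ε ∧ rε ε < ε) →
      Tendsto (fun ε : ℝ => rε ε / ε ^ ((n : ℝ) / ((n : ℝ) - 2)))
        (nhdsWithin 0 (Set.Ioi 0)) (nhds 0) →
      (Tendsto (fun ε : ℝ =>
          ∫ x in Ω₀,
            ‖gradient (fun y : EuclideanSpace ℝ (Fin n) =>
                (if ‖y‖ ≤ rε ε then (0 : ℝ)
                 else if ‖y‖ < ε then
                   (rε ε ^ (2 - (n : ℝ)) - ‖y‖ ^ (2 - (n : ℝ)))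
                     / (rε ε ^ (2 - (n : ℝ)) - ε ^ (2 - (n : ℝ)))
                 else 1)) x‖ ^ 2)
        (nhdsWithin 0 (Set.Ioi 0)) (nhds 0) ∧
      Tendsto (fun ε : ℝ =>
          ∫ x in Ω₀,
            ((if ‖x‖ ≤ rε ε then (0 : ℝ)
              else if ‖x‖ < ε then
                (rε ε ^ (2 - (n : ℝ)) - ‖x‖ ^ (2 - (n : ℝ)))
                  / (rε ε ^ (2 - (n : ℝ)) - ε ^ (2 - (n : ℝ)))
              else 1)) ^ 2)
        (nhdsWithin 0 (Set.Ioi 0)) (nhds (volume Ω₀).toReal))) := by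
  have hE : finrank ℝ (EuclideanSpace ℝ (Fin n)) = n := finrank_euclideanSpace_fin
  have : Nontrivial (EuclideanSpace ℝ (Fin n)) :=
    nontrivial_of_finrank_pos (R := ℝ) (by rw [hE]; omega)
  have hq : (1 : ℝ) ≤ n / (n - 2) := by
    have : (2 : ℝ) < n := by exact_mod_cast hn
    rw [one_le_div (by linarith)]
    linarith
  refine ⟨fun r ε hr hrε ↦ ⟨fun x hx _ ↦ ?_, ?_⟩, fun Ω₀ _ hΩ _ rε hrε hlim ↦ ⟨?_, ?_⟩⟩
  · exact (hasGradientAt_harmonicProfile n r ε (norm_pos_iff.1 (hr.trans hx))).gradient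
  · exact setIntegral_annulus_norm_gradient_harmonicProfile_sq volume hE hn hr hrε
  · exact tendsto_setIntegral_norm_gradient_corrector_sq volume hE hn Ω₀ hrε
      (tendsto_div_of_tendsto_div_rpow hq hlim)
  · exact tendsto_setIntegral_corrector_sq volume (by omega) hΩ.measure_lt_top.ne hrε
end
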